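/- Let X be a compact metric space and f : X → X a continuous map. If A is an attractor, then its dual repeller A* = {x ∈ X : ω(x) ∩ A = ∅} is a repeller, and the dual attractor of A* equals A, i.e. {x ∈ X : there exists a backward orbit γ through x with α_o(γ) ∩ A* = ∅} = A. Conversely, if R is a repeller, then its dual attractor R* = {x ∈ X : there exists a backward orbit γ through x with α_o(γ) ∩ R = ∅} is an attractor, and the dual repeller of R* equals R, i.e. {x ∈ X : ω(x) ∩ R* = ∅} = R. -/

import Mathlib

open Set

/-- The maximal invariant set in `U`: the union of all subsets `S ⊆ U` with `f '' S = S`. -/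
def MaxInv {Y : Type*} (f : Y → Y) (U : Set Y) : Set Y :=
  ⋃₀ {S : Set Y | S ⊆ U ∧ f '' S = S}

/-- The maximal forward invariant set in `U`: the union of all subsets `S ⊆ U`
with `f '' S ⊆ S`. -/
def MaxInvPlus {Y : Type*} (f : Y → Y) (U : Set Y) : Set Y :=
  ⋃₀ {S : Set Y | S ⊆ U ∧ f '' S ⊆ S}

/-- The omega-limit set `ω(U) = ⋂_{n ≥ 0} cl (⋃_{m ≥ n} f^[m] '' U)`. -/
def OmegaLim {Y : Type*} [TopologicalSpace Y] (f : Y → Y) (U : Set Y) : Set Y :=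
  ⋂ n : ℕ, closure (⋃ m ≥ n, f^[m] '' U)

/-- The alpha-limit set `α(U) = ⋂_{n ≥ 0} cl (⋃_{m ≥ n} (f^[m]) ⁻¹' U)`. -/
def AlphaLim {Y : Type*} [TopologicalSpace Y] (f : Y → Y) (U : Set Y) : Set Y :=
  ⋂ n : ℕ, closure (⋃ m ≥ n, f^[m] ⁻¹' U)

/-- A trapping region: a forward invariant set `U` with `f^[n] '' cl U ⊆ int U`
for some `n ≥ 1`. -/
def IsTrappingRegion {Y : Type*} [TopologicalSpace Y] (f : Y → Y) (U : Set Y) : Prop :=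
  f '' U ⊆ U ∧ ∃ n : ℕ, 1 ≤ n ∧ f^[n] '' closure U ⊆ interior U

/-- An attractor: `A = Inv(U)` for some trapping region `U`. -/
def IsAttractor {Y : Type*} [TopologicalSpace Y] (f : Y → Y) (A : Set Y) : Prop :=
  ∃ U : Set Y, IsTrappingRegion f U ∧ A = MaxInv f U

/-- An attracting neighborhood: `ω(U) ⊆ int U`. -/
def IsAttractingNbhd {Y : Type*} [TopologicalSpace Y] (f : Y → Y) (U : Set Y) : Prop :=
  OmegaLim f U ⊆ interior U

/-- A repelling region: a backward invariant set `U` with `(f^[n]) ⁻¹' cl U ⊆ int U`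
for some `n ≥ 1`. -/
def IsRepellingRegion {Y : Type*} [TopologicalSpace Y] (f : Y → Y) (U : Set Y) : Prop :=
  f ⁻¹' U ⊆ U ∧ ∃ n : ℕ, 1 ≤ n ∧ f^[n] ⁻¹' closure U ⊆ interior U

/-- A repeller: `R = Inv⁺(U)` for some repelling region `U`. -/
def IsRepeller {Y : Type*} [TopologicalSpace Y] (f : Y → Y) (R : Set Y) : Prop :=
  ∃ U : Set Y, IsRepellingRegion f U ∧ R = MaxInvPlus f U

/-- A repelling neighborhood: `α(U) ⊆ int U`. -/
def IsRepellingNbhd {Y : Type*} [TopologicalSpace Y] (f : Y → Y) (U : Set Y) : Prop :=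
  AlphaLim f U ⊆ interior U

/-- A backward orbit: a sequence `γ : ℕ → Y` with `f (γ (k+1)) = γ k` for all `k`.
A backward orbit through `x` additionally satisfies `γ 0 = x`. -/
def IsBackwardOrbit {Y : Type*} (f : Y → Y) (γ : ℕ → Y) : Prop :=
  ∀ k : ℕ, f (γ (k + 1)) = γ k

/-- The orbital alpha-limit set `α_o(γ) = ⋂_{n ≥ 0} cl {γ m : m ≥ n}`. -/
def OrbAlpha {Y : Type*} [TopologicalSpace Y] (γ : ℕ → Y) : Set Y :=
  ⋂ n : ℕ, closure (γ '' {m : ℕ | n ≤ m})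

/-- The dual repeller of an attractor `A`: `A* = {x : ω(x) ∩ A = ∅}`. -/
def DualRepeller {Y : Type*} [TopologicalSpace Y] (f : Y → Y) (A : Set Y) : Set Y :=
  {x : Y | OmegaLim f {x} ∩ A = ∅}

/-- The dual attractor of a repeller `R`:
`R* = {x : ∃ backward orbit γ through x with α_o(γ) ∩ R = ∅}`. -/
def DualAttractor {Y : Type*} [TopologicalSpace Y] (f : Y → Y) (R : Set Y) : Set Y :=
  {x : Y | ∃ γ : ℕ → Y, γ 0 = x ∧ IsBackwardOrbit f γ ∧ OrbAlpha γ ∩ R = ∅}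

/-!
The limit set `ω(x)` of a forward orbit is nonempty and invariant, and the limit set `α_o(γ)` of a
backward orbit is nonempty and forward invariant. If the orbit of `x` enters a trapping region `U`,
then `ω(x)` is an invariant subset of `cl U`, and `f^[n] '' cl U ⊆ int U` pushes it into `Inv(U)`;
if the orbit stays in `Uᶜ`, then `ω(x) ⊆ cl Uᶜ` misses `Inv(U) ⊆ int U`. Hence the dual repeller
of `Inv(U)` is `Inv⁺(Uᶜ)`. Symmetrically, the dual attractor of `Inv⁺(V)` is `Inv(Vᶜ)` for a
repelling region `V`, and the complement of a trapping region is a repelling region and vice versa.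
-/

open Filter Function

section

variable {X : Type*} {f : X → X} {U S : Set X}

section MaximalInvariantSets

theorem maxInv_subset : MaxInv f U ⊆ U :=
  sUnion_subset fun _ hS => hS.1

theorem subset_maxInv (hSU : S ⊆ U) (hS : f '' S = S) : S ⊆ MaxInv f U :=
  subset_sUnion_of_mem ⟨hSU, hS⟩

theorem image_maxInv : f '' MaxInv f U = MaxInv f U := by
  apply Subset.antisymm
  · rintro _ ⟨x, ⟨S, hS, hxS⟩, rfl⟩
    exact ⟨S, hS, hS.2 ▸ mem_image_of_mem f hxS⟩
  · exact sUnion_subset fun S hS => hS.2 ▸ image_mono (subset_sUnion_of_mem hS)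

theorem maxInvPlus_subset : MaxInvPlus f U ⊆ U :=
  sUnion_subset fun _ hS => hS.1

theorem subset_maxInvPlus (hSU : S ⊆ U) (hS : f '' S ⊆ S) : S ⊆ MaxInvPlus f U :=
  subset_sUnion_of_mem ⟨hSU, hS⟩

theorem image_maxInvPlus_subset : f '' MaxInvPlus f U ⊆ MaxInvPlus f U := by
  rintro _ ⟨x, ⟨S, hS, hxS⟩, rfl⟩
  exact ⟨S, hS, hS.2 (mem_image_of_mem f hxS)⟩

theorem mem_maxInvPlus_iff {x : X} : x ∈ MaxInvPlus f U ↔ ∀ n, f^[n] x ∈ U := by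
  refine ⟨fun hx n => maxInvPlus_subset (f := f) ?_, fun hx => ?_⟩
  · exact (mapsTo_iff_image_subset.2 image_maxInvPlus_subset).iterate n hx
  · refine subset_maxInvPlus (S := range fun n => f^[n] x) ?_ ?_ ⟨0, rfl⟩
    · exact range_subset_iff.2 hx
    · rintro _ ⟨_, ⟨n, rfl⟩, rfl⟩
      exact ⟨n + 1, iterate_succ_apply' f n x⟩

theorem image_iterate_of_image_eq (hS : f '' S = S) (n : ℕ) : f^[n] '' S = S := by
  rw [image_iterate_eq]
  exact iterate_fixed hS n

end MaximalInvariantSets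

section BackwardOrbits

variable {γ : ℕ → X}

theorem IsBackwardOrbit.mem_of_le (hγ : IsBackwardOrbit f γ) (hU : f ⁻¹' U ⊆ U) {k : ℕ}
    (hk : γ k ∈ U) {n : ℕ} (hkn : k ≤ n) : γ n ∈ U := by
  induction n, hkn using Nat.le_induction with
  | base => exact hk
  | succ n _ ih => exact hU (by rw [mem_preimage, hγ n]; exact ih)

/-- The full orbit `{f^[n] (γ k)}` is invariant. -/
theorem IsBackwardOrbit.mem_maxInv (hγ : IsBackwardOrbit f γ) (hU : f '' U ⊆ U)
    (hγU : ∀ k, γ k ∈ U) : γ 0 ∈ MaxInv f U := by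
  refine subset_maxInv (S := {y | ∃ k n, f^[n] (γ k) = y}) ?_ ?_ ⟨0, 0, rfl⟩
  · rintro _ ⟨k, n, rfl⟩
    exact (mapsTo_iff_image_subset.2 hU).iterate n (hγU k)
  apply Subset.antisymm
  · rintro _ ⟨_, ⟨k, n, rfl⟩, rfl⟩
    exact ⟨k, n + 1, iterate_succ_apply' f n (γ k)⟩
  · rintro _ ⟨k, n, rfl⟩
    refine ⟨f^[n] (γ (k + 1)), ⟨k + 1, n, rfl⟩, ?_⟩
    rw [← iterate_succ_apply' f n, iterate_succ_apply, hγ k]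

theorem exists_isBackwardOrbit_of_image_eq (hS : f '' S = S) {x : X} (hx : x ∈ S) :
    ∃ γ : ℕ → X, γ 0 = x ∧ IsBackwardOrbit f γ ∧ ∀ k, γ k ∈ S := by
  have hpre : ∀ y : S, ∃ z : S, f z = y := fun y => by
    obtain ⟨z, hz, hzy⟩ : (y : X) ∈ f '' S := hS.symm ▸ y.2
    exact ⟨⟨z, hz⟩, hzy⟩
  choose g hg using hpre
  refine ⟨fun k => (g^[k] ⟨x, hx⟩ : X), rfl, fun k => ?_, fun k => (g^[k] ⟨x, hx⟩).2⟩
  simp only [iterate_succ_apply', hg]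

end BackwardOrbits

section LimitSets

variable [TopologicalSpace X]

theorem mem_orbAlpha_iff_mapClusterPt {u : ℕ → X} {y : X} :
    y ∈ OrbAlpha u ↔ MapClusterPt y atTop u := by
  rw [mapClusterPt_atTop_iff_forall_mem_closure]
  exact mem_iInter

theorem orbAlpha_nonempty [CompactSpace X] (u : ℕ → X) : (OrbAlpha u).Nonempty :=
  let ⟨y, hy⟩ := exists_clusterPt_of_compactSpace (map u atTop)
  ⟨y, mem_orbAlpha_iff_mapClusterPt.2 hy⟩

theorem orbAlpha_comp_add (u : ℕ → X) (k : ℕ) : OrbAlpha (fun n => u (n + k)) = OrbAlpha u := by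
  ext y
  rw [mem_orbAlpha_iff_mapClusterPt, mem_orbAlpha_iff_mapClusterPt]
  change MapClusterPt y atTop (u ∘ (· + k)) ↔ _
  rw [mapClusterPt_comp, map_add_atTop_eq_nat]

/-- Limit points of `f ∘ u` lift to limit points of `u` because `f` is a proper map. -/
theorem image_orbAlpha [CompactSpace X] [T2Space X] (hf : Continuous f) (u : ℕ → X) :
    f '' OrbAlpha u = OrbAlpha (f ∘ u) := by
  ext y
  simp only [mem_image, mem_orbAlpha_iff_mapClusterPt]
  constructor
  · rintro ⟨x, hx, rfl⟩
    exact hx.continuousAt_comp hf.continuousAt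
  · intro hy
    obtain ⟨x, rfl, hx⟩ := hf.isProperMap.clusterPt_of_mapClusterPt (mapClusterPt_comp.1 hy)
    exact ⟨x, hx, rfl⟩

theorem orbAlpha_subset_closure {u : ℕ → X} (k : ℕ) (h : ∀ n ≥ k, u n ∈ U) :
    OrbAlpha u ⊆ closure U :=
  (iInter_subset _ k).trans (closure_mono (image_subset_iff.2 h))

theorem omegaLim_singleton (x : X) : OmegaLim f {x} = OrbAlpha fun n => f^[n] x := by
  unfold OmegaLim OrbAlpha
  congr! with n
  ext y
  simp [eq_comm]

theorem image_orbAlpha_iterate [CompactSpace X] [T2Space X] (hf : Continuous f) (x : X) :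
    f '' OrbAlpha (fun n => f^[n] x) = OrbAlpha fun n => f^[n] x := by
  rw [image_orbAlpha hf]
  conv_rhs => rw [← orbAlpha_comp_add _ 1]
  congr 1
  funext n
  exact (iterate_succ_apply' f n x).symm

theorem IsBackwardOrbit.image_orbAlpha [CompactSpace X] [T2Space X] (hf : Continuous f)
    {γ : ℕ → X} (hγ : IsBackwardOrbit f γ) : f '' OrbAlpha γ = OrbAlpha γ := by
  conv_lhs => rw [← orbAlpha_comp_add γ 1, _root_.image_orbAlpha hf]
  congr 1
  funext n
  exact hγ n

end LimitSets

section Regions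

variable [TopologicalSpace X]

theorem isRepellingRegion_compl_iff : IsRepellingRegion f Uᶜ ↔ IsTrappingRegion f U := by
  simp only [IsRepellingRegion, IsTrappingRegion, image_subset_iff, closure_compl,
    interior_compl, preimage_compl, compl_subset_compl]

theorem isTrappingRegion_compl_iff : IsTrappingRegion f Uᶜ ↔ IsRepellingRegion f U := by
  rw [← isRepellingRegion_compl_iff, compl_compl]

theorem IsTrappingRegion.subset_interior (hU : IsTrappingRegion f U) (hS : f '' S = S)
    (hSU : S ⊆ closure U) : S ⊆ interior U := by
  obtain ⟨-, n, -, hn⟩ := hU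
  calc S = f^[n] '' S := (image_iterate_of_image_eq hS n).symm
    _ ⊆ f^[n] '' closure U := image_mono hSU
    _ ⊆ interior U := hn

theorem IsTrappingRegion.subset_maxInv (hU : IsTrappingRegion f U) (hS : f '' S = S)
    (hSU : S ⊆ closure U) : S ⊆ MaxInv f U :=
  _root_.subset_maxInv ((hU.subset_interior hS hSU).trans interior_subset) hS

theorem IsTrappingRegion.maxInv_subset_interior (hU : IsTrappingRegion f U) :
    MaxInv f U ⊆ interior U :=
  hU.subset_interior image_maxInv (maxInv_subset.trans subset_closure)

theorem IsRepellingRegion.subset_interior (hU : IsRepellingRegion f U) (hS : f '' S ⊆ S)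
    (hSU : S ⊆ closure U) : S ⊆ interior U := by
  obtain ⟨-, n, -, hn⟩ := hU
  exact fun x hx => hn (hSU ((mapsTo_iff_image_subset.2 hS).iterate n hx))

theorem IsRepellingRegion.subset_maxInvPlus (hU : IsRepellingRegion f U) (hS : f '' S ⊆ S)
    (hSU : S ⊆ closure U) : S ⊆ MaxInvPlus f U :=
  _root_.subset_maxInvPlus ((hU.subset_interior hS hSU).trans interior_subset) hS

theorem IsRepellingRegion.maxInvPlus_subset_interior (hU : IsRepellingRegion f U) :
    MaxInvPlus f U ⊆ interior U :=
  hU.subset_interior image_maxInvPlus_subset (maxInvPlus_subset.trans subset_closure)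

end Regions

section Duality

variable [TopologicalSpace X] [CompactSpace X] [T2Space X]

theorem IsTrappingRegion.dualRepeller_maxInv (hf : Continuous f) (hU : IsTrappingRegion f U) :
    DualRepeller f (MaxInv f U) = MaxInvPlus f Uᶜ := by
  ext x
  rw [DualRepeller, mem_ofPred_eq, mem_maxInvPlus_iff, omegaLim_singleton]
  constructor
  · intro hdisj k hk
    have htail : ∀ n ≥ k, f^[n] x ∈ U := fun n hkn => by
      obtain ⟨j, rfl⟩ := Nat.exists_eq_add_of_le hkn
      rw [add_comm, iterate_add_apply]
      exact (mapsTo_iff_image_subset.2 hU.1).iterate j hk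
    have hω := hU.subset_maxInv (image_orbAlpha_iterate hf x) (orbAlpha_subset_closure k htail)
    obtain ⟨y, hy⟩ := orbAlpha_nonempty fun n => f^[n] x
    exact (eq_empty_iff_forall_notMem.1 hdisj) y ⟨hy, hω hy⟩
  · intro hx
    have hω := orbAlpha_subset_closure 0 fun n _ => hx n
    rw [closure_compl] at hω
    exact (disjoint_compl_left.mono hω hU.maxInv_subset_interior).inter_eq

theorem IsRepellingRegion.dualAttractor_maxInvPlus (hf : Continuous f)
    (hU : IsRepellingRegion f U) : DualAttractor f (MaxInvPlus f U) = MaxInv f Uᶜ := by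
  ext x
  constructor
  · rintro ⟨γ, rfl, hγ, hdisj⟩
    refine hγ.mem_maxInv (isTrappingRegion_compl_iff.2 hU).1 fun k hk => ?_
    have hα := hU.subset_maxInvPlus (hγ.image_orbAlpha hf).subset
      (orbAlpha_subset_closure k fun n => hγ.mem_of_le hU.1 hk)
    obtain ⟨y, hy⟩ := orbAlpha_nonempty γ
    exact (eq_empty_iff_forall_notMem.1 hdisj) y ⟨hy, hα hy⟩
  · intro hx
    obtain ⟨γ, rfl, hγ, hγM⟩ := exists_isBackwardOrbit_of_image_eq image_maxInv hx
    refine ⟨γ, rfl, hγ, ?_⟩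
    have hα := orbAlpha_subset_closure 0 fun n _ => maxInv_subset (hγM n)
    rw [closure_compl] at hα
    exact (disjoint_compl_left.mono hα hU.maxInvPlus_subset_interior).inter_eq

end Duality

end

/-- Duality between attractors and repellers: `(A*)* = A` and
`(R*)* = R`. -/
theorem attractor_repeller_duality
    {X : Type*} [MetricSpace X] [CompactSpace X]
    (f : X → X) (hf : Continuous f) :
    (∀ A : Set X, IsAttractor f A →
      IsRepeller f (DualRepeller f A) ∧ DualAttractor f (DualRepeller f A) = A) ∧
    (∀ R : Set X, IsRepeller f R →
      IsAttractor f (DualAttractor f R) ∧ DualRepeller f (DualAttractor f R) = R) := by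
  constructor
  · rintro A ⟨U, hU, rfl⟩
    have hUc : IsRepellingRegion f Uᶜ := isRepellingRegion_compl_iff.2 hU
    refine ⟨⟨Uᶜ, hUc, hU.dualRepeller_maxInv hf⟩, ?_⟩
    rw [hU.dualRepeller_maxInv hf, hUc.dualAttractor_maxInvPlus hf, compl_compl]
  · rintro R ⟨V, hV, rfl⟩
    have hVc : IsTrappingRegion f Vᶜ := isTrappingRegion_compl_iff.2 hV
    refine ⟨⟨Vᶜ, hVc, hV.dualAttractor_maxInvPlus hf⟩, ?_⟩
    rw [hV.dualAttractor_maxInvPlus hf, hVc.dualRepeller_maxInv hf, compl_compl]
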